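/- arXiv:2305.12967 — 2 statements merged into one kernel-verified Lean document; each statement's English description precedes it below -/
import Mathlib

section
/- Let k > 0 and c > 0 be real constants, and define the softplus function σ(z) = k·ln(1 + exp(z/k)). Then the function f_σ(z) = σ(c/z)·z is monotonically increasing on (0, ∞): for all 0 < z₁ ≤ z₂, σ(c/z₁)·z₁ ≤ σ(c/z₂)·z₂. -/
/-!
The derivative of `z ↦ σ (c / z) * z` is `σ w - w * σ' w` at `w = c / z`. For the softplus,
`σ' w ≤ 1` and `w ≤ σ w`, so this is nonnegative whenever `w ≥ 0`.
-/

open Real Set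

theorem monotoneOn_comp_div_mul_of_mul_deriv_le {σ σ' : ℝ → ℝ} {c : ℝ} (hc : 0 < c)
    (hσ : ∀ w, 0 < w → HasDerivAt σ (σ' w) w) (hσ' : ∀ w, 0 < w → w * σ' w ≤ σ w) :
    MonotoneOn (fun z => σ (c / z) * z) (Ioi 0) := by
  have hderiv : ∀ z : ℝ, 0 < z →
      HasDerivAt (fun z => σ (c / z) * z) (σ' (c / z) * (-c / z ^ 2) * z + σ (c / z)) z := by
    intro z hz
    have hinv : HasDerivAt (fun z => c / z) (-c / z ^ 2) z := by
      simpa [div_eq_mul_inv, neg_div] using (hasDerivAt_inv hz.ne').const_mul c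
    have h := ((hσ _ (div_pos hc hz)).comp z hinv).mul (hasDerivAt_id' z)
    rwa [mul_one] at h
  refine monotoneOn_of_deriv_nonneg (convex_Ioi 0)
    (fun z hz => (hderiv z hz).continuousAt.continuousWithinAt) ?_ ?_
  · rw [interior_Ioi]
    exact fun z hz => (hderiv z hz).differentiableAt.differentiableWithinAt
  · rw [interior_Ioi]
    intro z (hz : 0 < z)
    have hw := hσ' _ (div_pos hc hz)
    rw [(hderiv z hz).deriv]
    have : σ' (c / z) * (-c / z ^ 2) * z = -(c / z * σ' (c / z)) := by field_simp
    linarith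

noncomputable def softplus (k w : ℝ) : ℝ := k * log (1 + exp (w / k))

theorem hasDerivAt_softplus {k : ℝ} (hk : k ≠ 0) (w : ℝ) :
    HasDerivAt (softplus k) (exp (w / k) / (1 + exp (w / k))) w := by
  have h := ((((hasDerivAt_id' w).div_const k).exp.const_add 1).log (by positivity)).const_mul k
  exact h.congr_deriv (by field_simp)

theorem le_softplus {k : ℝ} (hk : 0 < k) (w : ℝ) : w ≤ softplus k w := by
  have h : w / k ≤ log (1 + exp (w / k)) := by
    rw [le_log_iff_exp_le (by positivity)]
    linarith [exp_pos (w / k)]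
  rw [div_le_iff₀ hk] at h
  unfold softplus; linarith

theorem mul_deriv_softplus_le {k : ℝ} (hk : 0 < k) {w : ℝ} (hw : 0 ≤ w) :
    w * (exp (w / k) / (1 + exp (w / k))) ≤ softplus k w := by
  have hle : exp (w / k) / (1 + exp (w / k)) ≤ 1 := by
    rw [div_le_one (by positivity)]; linarith
  calc w * (exp (w / k) / (1 + exp (w / k))) ≤ w := mul_le_of_le_one_right hw hle
    _ ≤ softplus k w := le_softplus hk w

/-- For `k, c > 0` and the softplus `σ(z) = k·ln(1 + exp(z/k))`, the function
`f_σ(z) = σ(c/z)·z` is monotonically increasing on `(0, ∞)`. -/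
theorem stmt_8 (k c : ℝ) (hk : 0 < k) (hc : 0 < c) :
    ∀ z₁ z₂ : ℝ, 0 < z₁ → z₁ ≤ z₂ →
      k * Real.log (1 + Real.exp ((c / z₁) / k)) * z₁ ≤
        k * Real.log (1 + Real.exp ((c / z₂) / k)) * z₂ := by
  intro z₁ z₂ hz₁ hz
  have hmono : MonotoneOn (fun z => softplus k (c / z) * z) (Ioi 0) :=
    monotoneOn_comp_div_mul_of_mul_deriv_le hc (fun w _ => hasDerivAt_softplus hk.ne' w)
      (fun w hw => mul_deriv_softplus_le hk hw.le)
  exact hmono hz₁ (lt_of_lt_of_le hz₁ hz) hz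
end

section
/- Let n be a positive integer, β > 0, and x ∈ ℝⁿ with ‖x‖ < β (Euclidean norm). Then β·‖x‖/(β² − ‖x‖²) ≥ ln(β²/(β² − ‖x‖²)). Consequently, the barrier Lyapunov function B_f(x) = ln(β²/(β² − xᵀx)) on the ball {x : ‖x‖ ≤ β}, whose gradient is ∇B_f(x) = 2x/(β² − ‖x‖²), satisfies γ·‖∇B_f(x)‖ ≥ B_f(x) for all ‖x‖ < β with γ = β/2. -/
namespace Real

theorem log_div_le_sub_div {a b : ℝ} (ha : 0 < a) (hb : 0 < b) :
    log (a / b) ≤ (a - b) / b := by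
  calc log (a / b) ≤ a / b - 1 := log_le_sub_one_of_pos (div_pos ha hb)
    _ = (a - b) / b := by field_simp

theorem log_sq_div_sq_sub_sq_le {β r : ℝ} (hr : 0 ≤ r) (hrβ : r < β) :
    log (β ^ 2 / (β ^ 2 - r ^ 2)) ≤ β * r / (β ^ 2 - r ^ 2) := by
  have hd : 0 < β ^ 2 - r ^ 2 := by nlinarith
  calc log (β ^ 2 / (β ^ 2 - r ^ 2)) ≤ (β ^ 2 - (β ^ 2 - r ^ 2)) / (β ^ 2 - r ^ 2) :=
        log_div_le_sub_div (by nlinarith) hd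
    _ = r ^ 2 / (β ^ 2 - r ^ 2) := by ring
    _ ≤ β * r / (β ^ 2 - r ^ 2) := by gcongr; nlinarith

end Real

theorem half_mul_norm_two_div_smul {E : Type*} [SeminormedAddCommGroup E] [NormedSpace ℝ E]
    {d : ℝ} (hd : 0 < d) (β : ℝ) (x : E) :
    β / 2 * ‖(2 / d) • x‖ = β * ‖x‖ / d := by
  rw [norm_smul, Real.norm_of_nonneg (by positivity)]
  field_simp

theorem stmt_16_general {n : ℕ} (β : ℝ)
    (x : EuclideanSpace ℝ (Fin n)) (hx : ‖x‖ < β) :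
    β * ‖x‖ / (β ^ 2 - ‖x‖ ^ 2) ≥ Real.log (β ^ 2 / (β ^ 2 - ‖x‖ ^ 2)) ∧
    (β / 2) * ‖(2 / (β ^ 2 - ‖x‖ ^ 2)) • x‖ ≥ Real.log (β ^ 2 / (β ^ 2 - ‖x‖ ^ 2)) := by
  have hlog := Real.log_sq_div_sq_sub_sq_le (norm_nonneg x) hx
  have hd : 0 < β ^ 2 - ‖x‖ ^ 2 := by nlinarith [norm_nonneg x]
  exact ⟨hlog, by rwa [half_mul_norm_two_div_smul hd]⟩

/-- For `β > 0` and `x ∈ ℝⁿ` with `‖x‖ < β`,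
`β·‖x‖/(β² − ‖x‖²) ≥ ln(β²/(β² − ‖x‖²))`; consequently the BLF
`B_f(x) = ln(β²/(β² − xᵀx))` with gradient `∇B_f(x) = 2x/(β² − ‖x‖²)` satisfies
`γ·‖∇B_f(x)‖ ≥ B_f(x)` with `γ = β/2`. -/
theorem stmt_16 {n : ℕ} (hn : 0 < n) (β : ℝ) (hβ : 0 < β)
    (x : EuclideanSpace ℝ (Fin n)) (hx : ‖x‖ < β) :
    β * ‖x‖ / (β ^ 2 - ‖x‖ ^ 2) ≥ Real.log (β ^ 2 / (β ^ 2 - ‖x‖ ^ 2)) ∧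
    (β / 2) * ‖(2 / (β ^ 2 - ‖x‖ ^ 2)) • x‖ ≥ Real.log (β ^ 2 / (β ^ 2 - ‖x‖ ^ 2)) :=
  stmt_16_general β x hx
end
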